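/- In a semigraph algebra, for every word w there exist finitely many half-standard words a₁,…,a_n such that ww* = Σᵢ aᵢaᵢ*, and there exist half-standard words b₁,…,b_m and c₁,…,c_m with w = Σⱼ bⱼcⱼ* and d(w) = d(bⱼ) − d(cⱼ) for all j. In particular a semigraph algebra is linearly spanned by its standard words 𝒯₁𝒫𝒯₁*. -/

import Mathlib

/-- The set of minimal common extensions `𝒯₁^{(min)}(x,y)` of `x` and `y`:
pairs `(α,β)` in `𝒯₁` with `xα = yβ ≠ 0` of degree `d(x) ⊔ d(y)`. -/
def mceSet {k X : Type*} [Ring X] (T1 : Set X) (deg : X → (k →₀ ℕ))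
    (x y : X) : Set (X × X) :=
  {ab | ab.1 ∈ T1 ∧ ab.2 ∈ T1 ∧ x * ab.1 ≠ 0 ∧ x * ab.1 = y * ab.2 ∧
    deg (x * ab.1) = deg x ⊔ deg y}

/-- A `k`-semigraph algebra (Definition `DefSemigraphAlgebra`): a `*`-algebra
generated by a commuting multiplicatively closed set `𝒫` of projections and a
set `𝒯` of nonzero partial isometries forming a non-unital finitely aligned
`k`-semigraph (with unitization `𝒯₁ = 𝒯 ∪ {1}`), subject to the commutation
relations `p x = x q`, the expansion of `x* y` over minimal common extensions,
and carrying a gauge action (equivalently, it is the quotient of the free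
`*`-algebra by a subset of the fiber space). -/
structure SemigraphAlgebra (k : Type*) (X : Type*) [Ring X] [StarRing X]
    [Algebra ℂ X] where
  P : Set X
  T : Set X
  deg : X → (k →₀ ℕ)
  P_isProj : ∀ p ∈ P, p * p = p ∧ star p = p
  P_comm : ∀ p ∈ P, ∀ q ∈ P, p * q = q * p
  P_mulClosed : ∀ p ∈ P, ∀ q ∈ P, p * q ∈ P
  disjoint : ∀ t ∈ T, t ∉ P
  T_ne_zero : ∀ t ∈ T, t ≠ 0
  T_pisom : ∀ t ∈ T, t * star t * t = t
  T_mulClosed : ∀ s ∈ T, ∀ t ∈ T, s * t ≠ 0 → s * t ∈ T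
  one_notMem : (1 : X) ∉ T
  deg_one : deg 1 = 0
  deg_pos : ∀ t ∈ T, deg t ≠ 0
  deg_mul : ∀ s ∈ T, ∀ t ∈ T, s * t ≠ 0 → deg (s * t) = deg s + deg t
  ufp : ∀ x ∈ T, ∀ n₁ n₂ : k →₀ ℕ, deg x = n₁ + n₂ →
    ∃! ab : X × X, ab.1 ∈ insert (1:X) T ∧ ab.2 ∈ insert (1:X) T ∧
      x = ab.1 * ab.2 ∧ deg ab.1 = n₁ ∧ deg ab.2 = n₂
  finitelyAligned : ∀ x ∈ insert (1:X) T, ∀ y ∈ insert (1:X) T,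
    (mceSet (insert (1:X) T) deg x y).Finite
  P_commute_T : ∀ x ∈ T, ∀ p ∈ P, ∃ q ∈ P, p * x = x * q
  expansion : ∀ x (hx : x ∈ T), ∀ y (hy : y ∈ T), ∃ q : X × X → X,
    (∀ ab ∈ mceSet (insert (1:X) T) deg x y, q ab ∈ P) ∧
    star x * y =
      ∑ ab ∈ (finitelyAligned x (Set.mem_insert_of_mem _ hx)
          y (Set.mem_insert_of_mem _ hy)).toFinset,
        ab.1 * q ab * star ab.2
  gauge : ∀ lam : k → ℂ, (∀ i, ‖lam i‖ = 1) →
    ∃ σ : X ≃ₐ[ℂ] X, (∀ p ∈ P, σ p = p) ∧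
      ∀ t ∈ T, σ t = (∏ i ∈ (deg t).support, lam i ^ (deg t i)) • t

namespace SemigraphAlgebra

variable {k X : Type*} [Ring X] [StarRing X] [Algebra ℂ X]

/-- `𝒯₁`, the unitization of the semigraph `𝒯`. -/
def T1 (A : SemigraphAlgebra k X) : Set X := insert 1 A.T

end SemigraphAlgebra

namespace SemigraphAlgebra

variable {k X : Type*} [Ring X] [StarRing X] [Algebra ℂ X]

/-- A word in the generators `𝒯 ∪ 𝒫 ∪ 𝒯* ∪ 𝒫*`, encoded as a nonempty list of
letters, each a generator together with a flag recording a star. -/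
def IsWordList (A : SemigraphAlgebra k X) (l : List (X × Bool)) : Prop :=
  l ≠ [] ∧ ∀ a ∈ l, a.1 ∈ A.T ∪ A.P

/-- The element of `X` represented by a word. -/
def evalWord (l : List (X × Bool)) : X :=
  (l.map fun a => if a.2 then star a.1 else a.1).prod

/-- The formal adjoint of a word. -/
def starWord (l : List (X × Bool)) : List (X × Bool) :=
  l.reverse.map fun a => (a.1, !a.2)

end SemigraphAlgebra

namespace SemigraphAlgebra

variable {k X : Type*} [Ring X] [StarRing X] [Algebra ℂ X]

open Classical in
/-- The degree of a word: letters in `𝒫` have degree `0`, letters in `𝒯` their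
semigraph degree (in `ℤ^k`), starred letters negated degree. -/
noncomputable def wordDeg (A : SemigraphAlgebra k X) (l : List (X × Bool)) :
    k →₀ ℤ :=
  (l.map fun a => (if a.2 then (-1 : ℤ) else 1) •
    (if a.1 ∈ A.P then 0 else (A.deg a.1).mapRange (Nat.cast) Nat.cast_zero)).sum

/-- The set of standard words `𝒯₁𝒫𝒯₁*`. -/
def standardWords (A : SemigraphAlgebra k X) : Set X :=
  {x | ∃ s t p : X, s ∈ A.T1 ∧ t ∈ A.T1 ∧ p ∈ A.P ∧ x = s * p * star t}

end SemigraphAlgebra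

/-!
Both parts follow by induction on the word, absorbing one letter at a time from the left.
A letter `p ∈ 𝒫` commutes past `s ∈ 𝒯₁` (`p s = s p'`), and a letter `x ∈ 𝒯` multiplies
`s` to zero or to an element of `𝒯₁`; a starred letter `x*` is absorbed through the
expansion `x* s = Σ α q β*` over the minimal common extensions `(α, β)` of `x` and `s`.
Each step keeps the degree bookkeeping `d(w) = d(b) - d(c)`, since `xα = sβ`.
For `ww*` the cross terms of the expansion vanish: distinct minimal common extensions have
distinct second components `β` (unique factorisation) of equal degree, and distinct elements
of `𝒯₁` of equal degree have orthogonal ranges.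
-/

theorem AddSubmonoid.apply_mem_closure_of_forall {M N : Type*} [AddZeroClass M]
    [AddZeroClass N] (f : M →+ N) {s : Set M} {t : Set N}
    (h : ∀ x ∈ s, f x ∈ AddSubmonoid.closure t) {x : M} (hx : x ∈ AddSubmonoid.closure s) :
    f x ∈ AddSubmonoid.closure t :=
  (AddSubmonoid.closure_le (S := (AddSubmonoid.closure t).comap f)).mpr h hx

theorem AddSubmonoid.exists_fin_sum_of_mem_closure {M : Type*} [AddCommMonoid M]
    {s : Set M} {x : M} (hx : x ∈ AddSubmonoid.closure s) :
    ∃ (n : ℕ) (f : Fin n → M), (∀ i, f i ∈ s) ∧ x = ∑ i, f i := by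
  obtain ⟨l, hl, rfl⟩ := AddSubmonoid.exists_list_of_mem_closure hx
  exact ⟨l.length, fun i => l[i], fun i => hl _ (List.getElem_mem _),
    (Fin.sum_univ_getElem l).symm⟩

theorem Finset.sum_mul_star_sum_of_pairwise {ι R : Type*} [NonUnitalNonAssocSemiring R]
    [StarRing R] {F : Finset ι} {f : ι → R}
    (h : ∀ i ∈ F, ∀ j ∈ F, i ≠ j → f i * star (f j) = 0) :
    (∑ i ∈ F, f i) * star (∑ i ∈ F, f i) = ∑ i ∈ F, f i * star (f i) := by
  rw [star_sum, Finset.sum_mul_sum]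
  exact Finset.sum_congr rfl fun i hi =>
    Finset.sum_eq_single_of_mem i hi fun j hj hji => h i hi j hj hji.symm

namespace SemigraphAlgebra

section

variable {X : Type*} [Ring X] [StarRing X]

theorem evalWord_append (l₁ l₂ : List (X × Bool)) :
    evalWord (l₁ ++ l₂) = evalWord l₁ * evalWord l₂ := by
  simp [evalWord]

theorem evalWord_singleton_false (x : X) : evalWord [(x, false)] = x := by
  simp [evalWord]

theorem evalWord_singleton_true (x : X) : evalWord [(x, true)] = star x := by
  simp [evalWord]

end

variable {k X : Type*} [Ring X] [StarRing X] [Algebra ℂ X] {A : SemigraphAlgebra k X}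

variable (A) in
noncomputable def intDeg (x : X) : k →₀ ℤ := (A.deg x).mapRange Nat.cast Nat.cast_zero

theorem star_eq_of_mem_P {p : X} (hp : p ∈ A.P) : star p = p := (A.P_isProj p hp).2

theorem mul_self_eq_of_mem_P {p : X} (hp : p ∈ A.P) : p * p = p := (A.P_isProj p hp).1

theorem one_mem_T1 : (1 : X) ∈ A.T1 := Set.mem_insert _ _

theorem mem_T1_of_mem_T {t : X} (ht : t ∈ A.T) : t ∈ A.T1 := Set.mem_insert_of_mem _ ht

theorem eq_one_of_deg_eq_zero {u : X} (hu : u ∈ A.T1) (h : A.deg u = 0) : u = 1 :=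
  hu.resolve_right fun hT => A.deg_pos u hT h

theorem deg_mul_of_mem_T1 {u v : X} (hu : u ∈ A.T1) (hv : v ∈ A.T1) (h : u * v ≠ 0) :
    A.deg (u * v) = A.deg u + A.deg v := by
  rcases hu with rfl | hu
  · simp [A.deg_one]
  rcases hv with rfl | hv
  · simp [A.deg_one]
  exact A.deg_mul u hu v hv h

theorem mul_mem_T1 {u v : X} (hu : u ∈ A.T1) (hv : v ∈ A.T1) (h : u * v ≠ 0) :
    u * v ∈ A.T1 := by
  rcases hu with rfl | hu
  · simpa using hv
  rcases hv with rfl | hv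
  · simpa using mem_T1_of_mem_T hu
  exact mem_T1_of_mem_T (A.T_mulClosed u hu v hv h)

theorem mul_mem_T {x u : X} (hx : x ∈ A.T) (hu : u ∈ A.T1) (h : x * u ≠ 0) :
    x * u ∈ A.T := by
  rcases hu with rfl | hu
  · simpa using hx
  · exact A.T_mulClosed x hx u hu h

theorem intDeg_one : A.intDeg (1 : X) = 0 := by
  simp [intDeg, A.deg_one]

theorem intDeg_mul {u v : X} (hu : u ∈ A.T1) (hv : v ∈ A.T1) (h : u * v ≠ 0) :
    A.intDeg (u * v) = A.intDeg u + A.intDeg v := by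
  rw [intDeg, deg_mul_of_mem_T1 hu hv h, Finsupp.mapRange_add Nat.cast_add]
  rfl

theorem mul_eq_zero_or_intDeg_mul {u v : X} (hu : u ∈ A.T1) (hv : v ∈ A.T1) :
    u * v = 0 ∨ u * v ∈ A.T1 ∧ A.intDeg (u * v) = A.intDeg u + A.intDeg v := by
  by_cases h : u * v = 0
  · exact .inl h
  · exact .inr ⟨mul_mem_T1 hu hv h, intDeg_mul hu hv h⟩

theorem evalWord_singleton_of_mem_P {p : X} (hp : p ∈ A.P) (b : Bool) :
    evalWord [(p, b)] = p := by
  cases b <;> simp [evalWord, star_eq_of_mem_P hp]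

theorem wordDeg_append (l₁ l₂ : List (X × Bool)) :
    A.wordDeg (l₁ ++ l₂) = A.wordDeg l₁ + A.wordDeg l₂ := by
  simp [wordDeg]

theorem wordDeg_singleton_of_mem_P {p : X} (hp : p ∈ A.P) (b : Bool) :
    A.wordDeg [(p, b)] = 0 := by
  simp [wordDeg, hp]

theorem wordDeg_singleton_false {x : X} (hx : x ∈ A.T) :
    A.wordDeg [(x, false)] = A.intDeg x := by
  simp [wordDeg, A.disjoint x hx, intDeg]

theorem wordDeg_singleton_true {x : X} (hx : x ∈ A.T) :
    A.wordDeg [(x, true)] = -A.intDeg x := by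
  simp [wordDeg, A.disjoint x hx, intDeg]

theorem exists_mem_P_mul_eq {u p : X} (hu : u ∈ A.T1) (hp : p ∈ A.P) :
    ∃ q ∈ A.P, p * u = u * q := by
  rcases hu with rfl | hu
  · exact ⟨p, hp, by simp⟩
  · exact A.P_commute_T u hu p hp

theorem exists_mem_P_star_mul_eq {u p : X} (hu : u ∈ A.T1) (hp : p ∈ A.P) :
    ∃ q ∈ A.P, star u * p = q * star u := by
  obtain ⟨q, hq, h⟩ := exists_mem_P_mul_eq hu hp
  refine ⟨q, hq, ?_⟩
  simpa [star_mul, star_eq_of_mem_P hp, star_eq_of_mem_P hq] using congrArg star h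

theorem exists_mem_P_mul_mul_eq {p s r : X} (hp : p ∈ A.P) (hs : s ∈ A.T1) (hr : r ∈ A.P) :
    ∃ q ∈ A.P, p * (s * r) = s * q := by
  obtain ⟨q, hq, h⟩ := exists_mem_P_mul_eq hs hp
  exact ⟨q * r, A.P_mulClosed _ hq _ hr, by rw [← mul_assoc, h, mul_assoc]⟩

theorem deg_add_fst_of_mem_mceSet {x y : X} {ab : X × X} (hx : x ∈ A.T1)
    (hab : ab ∈ mceSet A.T1 A.deg x y) : A.deg x + A.deg ab.1 = A.deg x ⊔ A.deg y := by
  obtain ⟨h1, -, hne, -, hd⟩ := hab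
  rw [← deg_mul_of_mem_T1 hx h1 hne, hd]

theorem deg_add_snd_of_mem_mceSet {x y : X} {ab : X × X} (hy : y ∈ A.T1)
    (hab : ab ∈ mceSet A.T1 A.deg x y) : A.deg y + A.deg ab.2 = A.deg x ⊔ A.deg y := by
  obtain ⟨-, h2, hne, heq, hd⟩ := hab
  rw [← deg_mul_of_mem_T1 hy h2 (heq ▸ hne), ← heq, hd]

theorem intDeg_add_eq_of_mem_mceSet {x y : X} {ab : X × X} (hx : x ∈ A.T1) (hy : y ∈ A.T1)
    (hab : ab ∈ mceSet A.T1 A.deg x y) :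
    A.intDeg x + A.intDeg ab.1 = A.intDeg y + A.intDeg ab.2 := by
  obtain ⟨h1, h2, hne, heq, -⟩ := hab
  rw [← intDeg_mul hx h1 hne, ← intDeg_mul hy h2 (heq ▸ hne), heq]

theorem eq_of_mem_mceSet_of_deg_eq {x y : X} {ab : X × X} (hx : x ∈ A.T1) (hy : y ∈ A.T1)
    (hdeg : A.deg x = A.deg y) (hab : ab ∈ mceSet A.T1 A.deg x y) :
    ab = (1, 1) ∧ x = y := by
  have hsup : A.deg x ⊔ A.deg y = A.deg x := by rw [hdeg, sup_idem]
  have h1 : ab.1 = 1 := eq_one_of_deg_eq_zero hab.1 <| add_eq_left.mp <|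
    (deg_add_fst_of_mem_mceSet hx hab).trans hsup
  have h2 : ab.2 = 1 := eq_one_of_deg_eq_zero hab.2.1 <| add_eq_left.mp <|
    (deg_add_snd_of_mem_mceSet hy hab).trans (hsup.trans hdeg)
  refine ⟨Prod.ext h1 h2, ?_⟩
  simpa [h1, h2] using hab.2.2.2.1

theorem star_mul_self_mem_P {t : X} (ht : t ∈ A.T) : star t * t ∈ A.P := by
  obtain ⟨q, hq, heq⟩ := A.expansion t ht t ht
  have hone : ((1 : X), (1 : X)) ∈ mceSet A.T1 A.deg t t :=
    ⟨one_mem_T1, one_mem_T1, by simpa using A.T_ne_zero t ht, rfl, by simp⟩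
  have hF : (A.finitelyAligned t (mem_T1_of_mem_T ht) t (mem_T1_of_mem_T ht)).toFinset =
      {(1, 1)} := by
    ext ab
    simp only [Set.Finite.mem_toFinset, Finset.mem_singleton]
    refine ⟨fun h => (eq_of_mem_mceSet_of_deg_eq (mem_T1_of_mem_T ht)
      (mem_T1_of_mem_T ht) rfl h).1, fun h => h ▸ hone⟩
  rw [hF, Finset.sum_singleton] at heq
  simpa [heq] using hq _ hone

theorem mul_star_mul_self_eq {x : X} (hx : x ∈ A.T) : x * (star x * x) = x := by
  rw [← mul_assoc]
  exact A.T_pisom x hx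

theorem star_mul_self_mul_star_eq {x : X} (hx : x ∈ A.T) : star x * x * star x = star x := by
  simpa [star_mul, mul_assoc] using congrArg star (A.T_pisom x hx)

theorem star_mul_eq_zero_of_deg_eq {u v : X} (hu : u ∈ A.T1) (hv : v ∈ A.T1)
    (hdeg : A.deg u = A.deg v) (hne : u ≠ v) : star u * v = 0 := by
  rcases hu with rfl | hu'
  · rcases hv with rfl | hv
    · exact absurd rfl hne
    · exact absurd (hdeg.symm.trans A.deg_one) (A.deg_pos v hv)
  rcases hv with rfl | hv'
  · exact absurd (hdeg.trans A.deg_one) (A.deg_pos u hu')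
  obtain ⟨q, -, heq⟩ := A.expansion u hu' v hv'
  have hF : (A.finitelyAligned u (mem_T1_of_mem_T hu') v (mem_T1_of_mem_T hv')).toFinset =
      ∅ := by
    ext ab
    simp only [Set.Finite.mem_toFinset, Finset.notMem_empty, iff_false]
    exact fun h => hne (eq_of_mem_mceSet_of_deg_eq (mem_T1_of_mem_T hu')
      (mem_T1_of_mem_T hv') hdeg h).2
  rwa [hF, Finset.sum_empty] at heq

theorem eq_of_mul_eq_mul_left {x u v : X} (hx : x ∈ A.T) (hu : u ∈ A.T1) (hv : v ∈ A.T1)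
    (hne : x * u ≠ 0) (heq : x * u = x * v) : u = v := by
  have hx1 := mem_T1_of_mem_T hx
  have hdeg : A.deg u = A.deg v := add_left_cancel <| by
    rw [← deg_mul_of_mem_T1 hx1 hu hne, ← deg_mul_of_mem_T1 hx1 hv (heq ▸ hne), heq]
  obtain ⟨w, -, huniq⟩ := A.ufp (x * u) (mul_mem_T hx hu hne) (A.deg x) (A.deg u)
    (deg_mul_of_mem_T1 hx1 hu hne)
  have hu' := huniq (x, u) ⟨hx1, hu, rfl, rfl, rfl⟩
  have hv' := huniq (x, v) ⟨hx1, hv, heq, rfl, hdeg.symm⟩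
  exact congrArg Prod.snd (hu'.trans hv'.symm)

theorem star_snd_mul_snd_eq_zero {x y : X} {ab ab' : X × X} (hx : x ∈ A.T) (hy : y ∈ A.T1)
    (hab : ab ∈ mceSet A.T1 A.deg x y) (hab' : ab' ∈ mceSet A.T1 A.deg x y) (hne : ab ≠ ab') :
    star ab.2 * ab'.2 = 0 := by
  refine star_mul_eq_zero_of_deg_eq hab.2.1 hab'.2.1
    (add_left_cancel ((deg_add_snd_of_mem_mceSet hy hab).trans
      (deg_add_snd_of_mem_mceSet hy hab').symm)) fun h2 => hne (Prod.ext ?_ h2)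
  refine eq_of_mul_eq_mul_left hx hab.1 hab'.1 hab.2.2.1 ?_
  rw [hab.2.2.2.1, hab'.2.2.2.1, h2]

theorem exists_star_mul_eq_sum_mceSet {x s p : X} (hx : x ∈ A.T) (hs : s ∈ A.T1)
    (hp : p ∈ A.P) : ∃ (F : Finset (X × X)) (τ : X × X → X),
      (∀ ab ∈ F, ab ∈ mceSet A.T1 A.deg x s ∧ τ ab ∈ A.P) ∧
      star x * (s * p) = ∑ ab ∈ F, ab.1 * τ ab * star ab.2 := by
  rcases hs with rfl | hs
  -- the axiom `expansion` only covers `s ∈ 𝒯`; for `s = 1` the only extension is `(1, x)`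
  · obtain ⟨q, hq, h⟩ := exists_mem_P_star_mul_eq (mem_T1_of_mem_T hx) hp
    refine ⟨{(1, x)}, fun _ => q, ?_, by simpa using h⟩
    simp only [Finset.mem_singleton, forall_eq]
    exact ⟨⟨one_mem_T1, mem_T1_of_mem_T hx, by simpa using A.T_ne_zero x hx, by simp,
      by simp [A.deg_one]⟩, hq⟩
  obtain ⟨Q, hQ, heq⟩ := A.expansion x hx s hs
  set F := (A.finitelyAligned x (mem_T1_of_mem_T hx) s (mem_T1_of_mem_T hs)).toFinset
  have hF : ∀ ab ∈ F, ab ∈ mceSet A.T1 A.deg x s := fun ab h =>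
    (Set.Finite.mem_toFinset _).mp h
  have hcomm : ∀ ab ∈ F, ∃ q ∈ A.P, star ab.2 * p = q * star ab.2 := fun ab h =>
    exists_mem_P_star_mul_eq (hF ab h).2.1 hp
  choose! q hq hcomm using hcomm
  refine ⟨F, fun ab => Q ab * q ab,
    fun ab h => ⟨hF ab h, A.P_mulClosed _ (hQ ab (hF ab h)) _ (hq ab h)⟩, ?_⟩
  rw [← mul_assoc, heq, Finset.sum_mul]
  refine Finset.sum_congr rfl fun ab h => ?_
  rw [mul_assoc _ (star ab.2), hcomm ab h]
  simp only [mul_assoc]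

variable (A) in
def rangeProjs : Set X :=
  {y | ∃ s p : X, (s ∈ A.T1 ∧ p ∈ A.P) ∧ y = s * p * star (s * p)}

theorem mul_mul_star_eq_of_mem_P {u p : X} (hp : p ∈ A.P) :
    u * p * star (u * p) = u * p * star u := by
  rw [star_mul, star_eq_of_mem_P hp, ← mul_assoc, mul_assoc u p p, mul_self_eq_of_mem_P hp]

theorem mul_mul_star_mul_star_mem_rangeProjs {a b τ : X} (ha : a ∈ A.T1) (hb : b ∈ A.T1)
    (hτ : τ ∈ A.P) : a * τ * star b * star (a * τ * star b) ∈ A.rangeProjs := by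
  have hρ : τ * (star b * b) * τ ∈ A.P := by
    rcases hb with rfl | hb
    · simpa [mul_self_eq_of_mem_P hτ] using hτ
    · exact A.P_mulClosed _ (A.P_mulClosed _ hτ _ (star_mul_self_mem_P hb)) _ hτ
  refine ⟨a, _, ⟨ha, hρ⟩, ?_⟩
  rw [mul_mul_star_eq_of_mem_P hρ]
  simp only [star_mul, star_star, star_eq_of_mem_P hτ, mul_assoc]

theorem star_mul_mul_star_mem_closure_rangeProjs {x s r : X} (hx : x ∈ A.T) (hs : s ∈ A.T1)
    (hr : r ∈ A.P) :
    star x * (s * r) * star (star x * (s * r)) ∈ AddSubmonoid.closure A.rangeProjs := by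
  obtain ⟨F, τ, hF, heq⟩ := exists_star_mul_eq_sum_mceSet hx hs hr
  rw [heq, Finset.sum_mul_star_sum_of_pairwise]
  · exact AddSubmonoid.sum_mem _ fun ab h => AddSubmonoid.subset_closure
      (mul_mul_star_mul_star_mem_rangeProjs (hF ab h).1.1 (hF ab h).1.2.1 (hF ab h).2)
  · intro ab h ab' h' hne
    have h0 := star_snd_mul_snd_eq_zero hx hs (hF ab h).1 (hF ab' h').1 hne
    calc ab.1 * τ ab * star ab.2 * star (ab'.1 * τ ab' * star ab'.2)
        = ab.1 * τ ab * (star ab.2 * ab'.2) * star (ab'.1 * τ ab') := by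
          simp only [star_mul, star_star, mul_assoc]
      _ = 0 := by rw [h0, mul_zero, zero_mul]

theorem letter_mul_star_mem_rangeProjs {a : X × Bool} (ha : a.1 ∈ A.T ∪ A.P) :
    evalWord [a] * star (evalWord [a]) ∈ A.rangeProjs := by
  obtain ⟨x, b⟩ := a
  dsimp only at ha
  rcases ha with hx | hx
  · have hq := star_mul_self_mem_P hx
    cases b
    · refine ⟨x, _, ⟨mem_T1_of_mem_T hx, hq⟩, ?_⟩
      rw [evalWord_singleton_false, mul_star_mul_self_eq hx]
    · refine ⟨1, _, ⟨one_mem_T1, hq⟩, ?_⟩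
      rw [evalWord_singleton_true, star_star, one_mul, star_eq_of_mem_P hq,
        mul_self_eq_of_mem_P hq]
  · refine ⟨1, x, ⟨one_mem_T1, hx⟩, ?_⟩
    rw [evalWord_singleton_of_mem_P hx, one_mul, star_eq_of_mem_P hx]

theorem letter_conj_mem_closure_rangeProjs {a : X × Bool} (ha : a.1 ∈ A.T ∪ A.P) {y : X}
    (hy : y ∈ AddSubmonoid.closure A.rangeProjs) :
    evalWord [a] * y * star (evalWord [a]) ∈ AddSubmonoid.closure A.rangeProjs := by
  refine AddSubmonoid.apply_mem_closure_of_forall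
    ((AddMonoidHom.mulRight _).comp (AddMonoidHom.mulLeft _)) (fun y hy => ?_) hy
  obtain ⟨s, r, ⟨hs, hr⟩, rfl⟩ := hy
  simp only [AddMonoidHom.coe_comp, AddMonoidHom.coe_mulLeft, AddMonoidHom.coe_mulRight,
    Function.comp_apply]
  obtain ⟨x, b⟩ := a
  have hconj : ∀ v, v * (s * r * star (s * r)) * star v = v * (s * r) * star (v * (s * r)) := by
    intro v; simp only [star_mul, mul_assoc]
  rcases ha with hx | hx
  · cases b
    · rw [evalWord_singleton_false, hconj]
      rcases mul_eq_zero_or_intDeg_mul (mem_T1_of_mem_T hx) hs with h0 | ⟨hmem, -⟩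
      · simp [← mul_assoc, h0]
      · exact AddSubmonoid.subset_closure ⟨x * s, r, ⟨hmem, hr⟩, by simp only [mul_assoc]⟩
    · rw [evalWord_singleton_true, hconj]
      exact star_mul_mul_star_mem_closure_rangeProjs hx hs hr
  · obtain ⟨q, hq, h⟩ := exists_mem_P_mul_mul_eq hx hs hr
    rw [evalWord_singleton_of_mem_P hx, hconj, h]
    exact AddSubmonoid.subset_closure ⟨s, q, ⟨hs, hq⟩, rfl⟩

theorem evalWord_conj_mem_closure_rangeProjs {l : List (X × Bool)}
    (hl : ∀ a ∈ l, a.1 ∈ A.T ∪ A.P) {y : X} (hy : y ∈ AddSubmonoid.closure A.rangeProjs) :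
    evalWord l * y * star (evalWord l) ∈ AddSubmonoid.closure A.rangeProjs := by
  induction l with
  | nil => simpa [evalWord] using hy
  | cons a l ih =>
    have h := letter_conj_mem_closure_rangeProjs (hl a List.mem_cons_self)
      (ih fun b hb => hl b (List.mem_cons_of_mem _ hb))
    rw [← List.singleton_append, evalWord_append, star_mul]
    simpa only [mul_assoc] using h

variable (A) in
def standardWordsOfDeg (c : k →₀ ℤ) : Set X :=
  {w | ∃ s t p q : X, (s ∈ A.T1 ∧ t ∈ A.T1 ∧ p ∈ A.P ∧ q ∈ A.P) ∧
    w = s * p * star (t * q) ∧ c = A.intDeg s - A.intDeg t}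

theorem mul_mem_standardWordsOfDeg_of_mem_P {p y : X} {c : k →₀ ℤ} (hp : p ∈ A.P)
    (hy : y ∈ A.standardWordsOfDeg c) : p * y ∈ A.standardWordsOfDeg c := by
  obtain ⟨s, t, r, q, ⟨hs, ht, hr, hq⟩, rfl, rfl⟩ := hy
  obtain ⟨r', hr', h⟩ := exists_mem_P_mul_mul_eq hp hs hr
  exact ⟨s, t, r', q, ⟨hs, ht, hr', hq⟩, by rw [← mul_assoc, h], rfl⟩

theorem mul_mem_closure_standardWordsOfDeg {x y : X} {c : k →₀ ℤ} (hx : x ∈ A.T)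
    (hy : y ∈ A.standardWordsOfDeg c) :
    x * y ∈ AddSubmonoid.closure (A.standardWordsOfDeg (A.intDeg x + c)) := by
  obtain ⟨s, t, p, q, ⟨hs, ht, hp, hq⟩, rfl, rfl⟩ := hy
  rcases mul_eq_zero_or_intDeg_mul (mem_T1_of_mem_T hx) hs with h0 | ⟨hmem, hdeg⟩
  · simp [← mul_assoc, h0]
  · refine AddSubmonoid.subset_closure ⟨x * s, t, p, q, ⟨hmem, ht, hp, hq⟩,
      by simp only [mul_assoc], ?_⟩
    rw [hdeg, add_sub_assoc]

theorem star_mul_mem_closure_standardWordsOfDeg {x y : X} {c : k →₀ ℤ} (hx : x ∈ A.T)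
    (hy : y ∈ A.standardWordsOfDeg c) :
    star x * y ∈ AddSubmonoid.closure (A.standardWordsOfDeg (-A.intDeg x + c)) := by
  obtain ⟨s, t, p, q, ⟨hs, ht, hp, hq⟩, rfl, rfl⟩ := hy
  obtain ⟨F, τ, hF, heq⟩ := exists_star_mul_eq_sum_mceSet hx hs hp
  rw [← mul_assoc, heq, Finset.sum_mul]
  refine AddSubmonoid.sum_mem _ fun ab h => ?_
  obtain ⟨hmce, hτ⟩ := hF ab h
  obtain ⟨q', hq', hcomm⟩ := exists_mem_P_mul_eq hmce.2.1 hq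
  have hterm : ab.1 * τ ab * star ab.2 * star (t * q) = ab.1 * τ ab * star (t * ab.2 * q') := by
    rw [mul_assoc _ (star ab.2), ← star_mul, mul_assoc t, hcomm, ← mul_assoc]
  rw [hterm]
  rcases mul_eq_zero_or_intDeg_mul ht hmce.2.1 with h0 | ⟨hmem, hdeg⟩
  · simp [h0]
  · refine AddSubmonoid.subset_closure ⟨ab.1, t * ab.2, τ ab, q', ⟨hmce.1, hmem, hτ, hq'⟩,
      rfl, ?_⟩
    rw [hdeg]
    linear_combination (norm := abel) -intDeg_add_eq_of_mem_mceSet (mem_T1_of_mem_T hx) hs hmce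

theorem letter_mul_mem_closure_standardWordsOfDeg {a : X × Bool} (ha : a.1 ∈ A.T ∪ A.P)
    {y : X} {c : k →₀ ℤ} (hy : y ∈ AddSubmonoid.closure (A.standardWordsOfDeg c)) :
    evalWord [a] * y ∈ AddSubmonoid.closure (A.standardWordsOfDeg (A.wordDeg [a] + c)) := by
  refine AddSubmonoid.apply_mem_closure_of_forall (AddMonoidHom.mulLeft _) (fun y hy => ?_) hy
  obtain ⟨x, b⟩ := a
  rcases ha with hx | hx
  · cases b
    · rw [AddMonoidHom.coe_mulLeft, evalWord_singleton_false, wordDeg_singleton_false hx]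
      exact mul_mem_closure_standardWordsOfDeg hx hy
    · rw [AddMonoidHom.coe_mulLeft, evalWord_singleton_true, wordDeg_singleton_true hx]
      exact star_mul_mem_closure_standardWordsOfDeg hx hy
  · rw [AddMonoidHom.coe_mulLeft, evalWord_singleton_of_mem_P hx, wordDeg_singleton_of_mem_P hx,
      zero_add]
    exact AddSubmonoid.subset_closure (mul_mem_standardWordsOfDeg_of_mem_P hx hy)

theorem letter_mem_standardWordsOfDeg {a : X × Bool} (ha : a.1 ∈ A.T ∪ A.P) :
    evalWord [a] ∈ A.standardWordsOfDeg (A.wordDeg [a]) := by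
  obtain ⟨x, b⟩ := a
  dsimp only at ha
  rcases ha with hx | hx
  · have hq := star_mul_self_mem_P hx
    cases b
    · refine ⟨x, 1, _, _, ⟨mem_T1_of_mem_T hx, one_mem_T1, hq, hq⟩, ?_, ?_⟩
      · rw [evalWord_singleton_false, one_mul, star_eq_of_mem_P hq, mul_assoc,
          mul_self_eq_of_mem_P hq, mul_star_mul_self_eq hx]
      · rw [wordDeg_singleton_false hx, intDeg_one, sub_zero]
    · refine ⟨1, x, _, _, ⟨one_mem_T1, mem_T1_of_mem_T hx, hq, hq⟩, ?_, ?_⟩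
      · rw [evalWord_singleton_true, mul_star_mul_self_eq hx, one_mul,
          star_mul_self_mul_star_eq hx]
      · rw [wordDeg_singleton_true hx, intDeg_one, zero_sub]
  · refine ⟨1, 1, x, x, ⟨one_mem_T1, one_mem_T1, hx, hx⟩, ?_, ?_⟩
    · rw [evalWord_singleton_of_mem_P hx, one_mul, star_eq_of_mem_P hx,
        mul_self_eq_of_mem_P hx]
    · rw [wordDeg_singleton_of_mem_P hx, sub_self]

theorem evalWord_mul_mem_closure_standardWordsOfDeg {l : List (X × Bool)}
    (hl : ∀ a ∈ l, a.1 ∈ A.T ∪ A.P) {y : X} {c : k →₀ ℤ}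
    (hy : y ∈ AddSubmonoid.closure (A.standardWordsOfDeg c)) :
    evalWord l * y ∈ AddSubmonoid.closure (A.standardWordsOfDeg (A.wordDeg l + c)) := by
  induction l with
  | nil => simpa [evalWord, wordDeg] using hy
  | cons a l ih =>
    have h := letter_mul_mem_closure_standardWordsOfDeg (hl a List.mem_cons_self)
      (ih fun b hb => hl b (List.mem_cons_of_mem _ hb))
    rw [← List.singleton_append, evalWord_append, wordDeg_append, mul_assoc, add_assoc]
    exact h

theorem IsWordList.exists_eq_append_singleton {l : List (X × Bool)} (hl : A.IsWordList l) :
    ∃ l' a, l = l' ++ [a] ∧ (∀ b ∈ l', b.1 ∈ A.T ∪ A.P) ∧ a.1 ∈ A.T ∪ A.P := by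
  obtain ⟨l', a, rfl⟩ := (List.eq_nil_or_concat' l).resolve_left hl.1
  obtain ⟨hl', ha⟩ := List.forall_mem_append.mp hl.2
  exact ⟨l', a, rfl, hl', ha a (List.mem_singleton_self a)⟩

theorem IsWordList.mul_star_mem_closure_rangeProjs {l : List (X × Bool)}
    (hl : A.IsWordList l) :
    evalWord l * star (evalWord l) ∈ AddSubmonoid.closure A.rangeProjs := by
  obtain ⟨l, a, rfl, hl, ha⟩ := hl.exists_eq_append_singleton
  have h := evalWord_conj_mem_closure_rangeProjs hl
    (AddSubmonoid.subset_closure (letter_mul_star_mem_rangeProjs ha))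
  rw [evalWord_append, star_mul]
  simpa only [mul_assoc] using h

theorem IsWordList.mem_closure_standardWordsOfDeg {l : List (X × Bool)}
    (hl : A.IsWordList l) :
    evalWord l ∈ AddSubmonoid.closure (A.standardWordsOfDeg (A.wordDeg l)) := by
  obtain ⟨l, a, rfl, hl, ha⟩ := hl.exists_eq_append_singleton
  rw [evalWord_append, wordDeg_append]
  exact evalWord_mul_mem_closure_standardWordsOfDeg hl
    (AddSubmonoid.subset_closure (letter_mem_standardWordsOfDeg ha))

theorem standardWordsOfDeg_subset_standardWords (c : k →₀ ℤ) :
    A.standardWordsOfDeg c ⊆ A.standardWords := by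
  rintro _ ⟨s, t, p, q, ⟨hs, ht, hp, hq⟩, rfl, -⟩
  refine ⟨s, t, p * q, hs, ht, A.P_mulClosed _ hp _ hq, ?_⟩
  rw [star_mul, star_eq_of_mem_P hq]
  simp only [mul_assoc]

end SemigraphAlgebra

open SemigraphAlgebra in
/-- Lemma `semigraphwordrep`(b) and Corollary `corollarySpannedStandardWords`:
for every word `w`, `ww*` is a finite sum of range projections of
half-standard words, and `w = Σⱼ bⱼcⱼ*` with `bⱼ, cⱼ` half-standard and
`d(w) = d(bⱼ) - d(cⱼ)`; in particular every word lies in the linear span of the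
standard words `𝒯₁𝒫𝒯₁*`. -/
theorem SemigraphAlgebra.word_standard_decomposition
    {k X : Type*} [Ring X] [StarRing X] [Algebra ℂ X]
    (A : SemigraphAlgebra k X) (l : List (X × Bool)) (hl : A.IsWordList l) :
    (∃ (n : ℕ) (s p : Fin n → X),
      (∀ i, s i ∈ A.T1 ∧ p i ∈ A.P) ∧
      evalWord l * star (evalWord l) =
        ∑ i, (s i * p i) * star (s i * p i)) ∧
    (∃ (m : ℕ) (s t p q : Fin m → X),
      (∀ j, s j ∈ A.T1 ∧ t j ∈ A.T1 ∧ p j ∈ A.P ∧ q j ∈ A.P) ∧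
      evalWord l = ∑ j, (s j * p j) * star (t j * q j) ∧
      ∀ j, A.wordDeg l =
        (A.deg (s j)).mapRange (Nat.cast) Nat.cast_zero -
          (A.deg (t j)).mapRange (Nat.cast) Nat.cast_zero) ∧
    evalWord l ∈ Submodule.span ℂ A.standardWords := by
  have hproj := hl.mul_star_mem_closure_rangeProjs
  have hstd := hl.mem_closure_standardWordsOfDeg
  refine ⟨?_, ?_, ?_⟩
  · obtain ⟨n, f, hf, hsum⟩ := AddSubmonoid.exists_fin_sum_of_mem_closure hproj
    choose s p hsp hf using hf
    exact ⟨n, s, p, hsp, hsum.trans (Finset.sum_congr rfl fun i _ => hf i)⟩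
  · obtain ⟨m, f, hf, hsum⟩ := AddSubmonoid.exists_fin_sum_of_mem_closure hstd
    choose s t p q hmem hf hdeg using hf
    exact ⟨m, s, t, p, q, hmem, hsum.trans (Finset.sum_congr rfl fun j _ => hf j), hdeg⟩
  · refine (AddSubmonoid.closure_le (S := (Submodule.span ℂ A.standardWords).toAddSubmonoid)).mpr
      ?_ hstd
    exact (standardWordsOfDeg_subset_standardWords _).trans Submodule.subset_span
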